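/- arXiv:1405.7112 — 4 statements merged into one kernel-verified Lean document; each statement's English description precedes it below -/
import Mathlib

section
/- Fix integers n ≥ k ≥ 1 and let y₁,…,y_k be the first k rows of a Haar-random n×n orthogonal matrix. Let μ be a probability measure on ℝ^k (a distribution of weights w = (w₁,…,w_k), drawn independently of the orthogonal matrix) with finite second moments such that E_μ[Σᵢ wᵢ] = n. Then for every n×n real matrix A, E_{μ × Haar}[(Σᵢ wᵢ yᵢᵀ A yᵢ)²] ≥ E_{Haar}[(Σᵢ (n/k) yᵢᵀ A yᵢ)²]. -/
open MeasureTheory Matrix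

noncomputable instance matrixMeasurableSpace (n : ℕ) :
    MeasurableSpace (Matrix (Fin n) (Fin n) ℝ) :=
  inferInstanceAs (MeasurableSpace (Fin n → Fin n → ℝ))

/-- `μ` is the Haar probability measure on the orthogonal group `O(n)`: a
left-translation-invariant Borel probability measure (this characterizes the Haar
probability measure on the compact group `O(n)`). -/
def IsHaarProb (n : ℕ) (μ : Measure (Matrix.orthogonalGroup (Fin n) ℝ)) : Prop :=
  IsProbabilityMeasure μ ∧
    ∀ g : Matrix.orthogonalGroup (Fin n) ℝ, μ.map (fun x => g * x) = μ

/-!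
Write `fᵢ(U) = yᵢᵀ A yᵢ` for the `i`-th row `yᵢ` of `U`. Left multiplication by a permutation
matrix preserves Haar measure and permutes the rows, so the second moments `E[fᵢ fⱼ]` take one
value `a` on the diagonal and one value `b ≤ a` off it (`2 fᵢ fⱼ ≤ fᵢ² + fⱼ²`). By independence
the left side is `b E[(Σ wᵢ)²] + (a - b) Σ E[wᵢ²]`, and the right side is
`(n/k)² E[(Σ fᵢ)²] = (n/k)² (b k² + (a - b) k)` with `b k² + (a - b) k ≥ 0`. The claim
follows from `E[(Σ wᵢ)²] ≥ (E[Σ wᵢ])² = n²` and `k Σ E[wᵢ²] ≥ E[(Σ wᵢ)²]`.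
-/

open Finset

instance (n : ℕ) : BorelSpace (Matrix (Fin n) (Fin n) ℝ) :=
  inferInstanceAs (BorelSpace (Fin n → Fin n → ℝ))

section SecondMoments

variable {Ω ι : Type*} [MeasurableSpace Ω] [Fintype ι] {μ : Measure Ω} {X : ι → Ω → ℝ}

theorem integral_sq_sum (hX : ∀ i j, Integrable (fun x => X i x * X j x) μ) :
    ∫ x, (∑ i, X i x) ^ 2 ∂μ = ∑ i, ∑ j, ∫ x, X i x * X j x ∂μ := by
  simp_rw [sq, sum_mul_sum]
  rw [integral_finsetSum _ fun i _ => integrable_finsetSum _ fun j _ => hX i j]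
  exact sum_congr rfl fun i _ => integral_finsetSum _ fun j _ => hX i j

theorem integral_prod_sq_sum_mul {W : Type*} [MeasurableSpace W] {ν : Measure W}
    [SFinite ν] [SFinite μ] {g : ι → W → ℝ} {f : ι → Ω → ℝ}
    (hg : ∀ i, MemLp (g i) 2 ν) (hf : ∀ i, MemLp (f i) 2 μ) :
    ∫ p, (∑ i, g i p.1 * f i p.2) ^ 2 ∂(ν.prod μ) =
      ∑ i, ∑ j, (∫ w, g i w * g j w ∂ν) * ∫ x, f i x * f j x ∂μ := by
  have hsplit : ∀ i j, (fun p : W × Ω => g i p.1 * f i p.2 * (g j p.1 * f j p.2)) =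
      fun p => (g i p.1 * g j p.1) * (f i p.2 * f j p.2) := fun i j => funext fun p => by ring
  rw [integral_sq_sum fun i j => hsplit i j ▸
    ((hg i).integrable_mul (hg j)).mul_prod ((hf i).integrable_mul (hf j))]
  simp_rw [hsplit]
  exact sum_congr rfl fun i _ => sum_congr rfl fun j _ =>
    integral_prod_mul (fun w => g i w * g j w) (fun x => f i x * f j x)

theorem two_mul_integral_mul_le {f g : Ω → ℝ} (hf : MemLp f 2 μ) (hg : MemLp g 2 μ) :
    2 * ∫ x, f x * g x ∂μ ≤ (∫ x, f x * f x ∂μ) + ∫ x, g x * g x ∂μ := by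
  have hff : Integrable (fun x => f x * f x) μ := hf.integrable_mul hf
  have hgg : Integrable (fun x => g x * g x) μ := hg.integrable_mul hg
  have hfg : Integrable (fun x => f x * g x) μ := hf.integrable_mul hg
  rw [← integral_const_mul, ← integral_add hff hgg]
  exact integral_mono (hfg.const_mul 2) (hff.add hgg) fun x => by
    nlinarith [sq_nonneg (f x - g x)]

theorem sq_integral_sum_le_sum_sum_integral_mul [IsProbabilityMeasure μ]
    (hX : ∀ i, MemLp (X i) 2 μ) :
    (∫ x, ∑ i, X i x ∂μ) ^ 2 ≤ ∑ i, ∑ j, ∫ x, X i x * X j x ∂μ := by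
  have hvar := ProbabilityTheory.variance_eq_sub (memLp_finsetSum univ fun i _ => hX i)
  simp only [Pi.pow_apply] at hvar
  rw [← integral_sq_sum fun i j => (hX i).integrable_mul (hX j)]
  linarith [ProbabilityTheory.variance_nonneg (fun x => ∑ i, X i x) μ]

theorem sum_sum_integral_mul_le_card_mul (hX : ∀ i, MemLp (X i) 2 μ) :
    ∑ i, ∑ j, ∫ x, X i x * X j x ∂μ ≤ Fintype.card ι * ∑ i, ∫ x, X i x * X i x ∂μ := by
  have hsq : ∀ i, Integrable (fun x => X i x * X i x) μ := fun i => (hX i).integrable_mul (hX i)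
  rw [← integral_sq_sum fun i j => (hX i).integrable_mul (hX j),
    ← integral_finsetSum _ fun i _ => hsq i, ← integral_const_mul]
  refine integral_mono (memLp_finsetSum univ fun i _ => hX i).integrable_sq
    ((integrable_finsetSum _ fun i _ => hsq i).const_mul _) fun x => ?_
  simpa [sq] using sq_sum_le_card_mul_sum_sq (s := univ) (f := fun i => X i x)

end SecondMoments

section Symmetric

variable {ι : Type*} [DecidableEq ι] {C : ι → ι → ℝ}

theorem apply_self_eq_of_perm_invariant (hC : ∀ (σ : Equiv.Perm ι) i j, C (σ i) (σ j) = C i j)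
    (i j : ι) : C i i = C j j := by
  simpa using hC (Equiv.swap i j) j j

theorem apply_eq_of_ne_of_perm_invariant (hC : ∀ (σ : Equiv.Perm ι) i j, C (σ i) (σ j) = C i j)
    {i j i' j' : ι} (hij : i ≠ j) (hij' : i' ≠ j') : C i j = C i' j' := by
  set τ := Equiv.swap i' i
  have hτ : i ≠ τ j' := by simpa [τ] using τ.injective.ne hij'
  rw [← hC (τ.trans (Equiv.swap (τ j') j)) i' j']
  simp [τ, Equiv.swap_apply_of_ne_of_ne hτ hij]

end Symmetric

theorem Equiv.Perm.permMatrix_mem_orthogonalGroup {ι : Type*} [Fintype ι] [DecidableEq ι]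
    (σ : Equiv.Perm ι) : σ.permMatrix ℝ ∈ orthogonalGroup ι ℝ := by
  rw [mem_orthogonalGroup_iff, transpose_permMatrix, ← permMatrix_mul, inv_mul_cancel,
    permMatrix_one]

section RowForm

variable {ι : Type*} [Fintype ι] [DecidableEq ι]

def rowForm (A : Matrix ι ι ℝ) (i : ι) (U : orthogonalGroup ι ℝ) : ℝ :=
  (U : Matrix ι ι ℝ) i ⬝ᵥ A *ᵥ (U : Matrix ι ι ℝ) i

theorem continuous_rowForm (A : Matrix ι ι ℝ) (i : ι) : Continuous (rowForm A i) := by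
  have hq : Continuous fun x : ι → ℝ => x ⬝ᵥ A *ᵥ x := by fun_prop
  exact hq.comp ((continuous_apply i).comp continuous_subtype_val)

theorem exists_bound_rowForm (A : Matrix ι ι ℝ) : ∃ C, ∀ i U, ‖rowForm A i U‖ ≤ C := by
  have hq : Continuous fun x : ι → ℝ => x ⬝ᵥ A *ᵥ x := by fun_prop
  obtain ⟨C, hC⟩ := (isCompact_closedBall (0 : ι → ℝ) 1).exists_bound_of_continuousOn
    hq.continuousOn
  exact ⟨C, fun i U => hC _ <| mem_closedBall_zero_iff.2 <|
    (pi_norm_le_iff_of_nonneg zero_le_one).2 fun j => entry_norm_bound_of_unitary U.2 i j⟩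

end RowForm

theorem memLp_rowForm {n : ℕ} {ν : Measure (orthogonalGroup (Fin n) ℝ)} [IsFiniteMeasure ν]
    (A : Matrix (Fin n) (Fin n) ℝ) (i : Fin n) (p : ENNReal) : MemLp (rowForm A i) p ν := by
  obtain ⟨C, hC⟩ := exists_bound_rowForm A
  exact MemLp.of_bound (continuous_rowForm A i).aestronglyMeasurable C (ae_of_all _ (hC i))

theorem IsHaarProb.integral_comp_mul_left {n : ℕ} {haar : Measure (orthogonalGroup (Fin n) ℝ)}
    (hhaar : IsHaarProb n haar) (g : orthogonalGroup (Fin n) ℝ) {F : orthogonalGroup (Fin n) ℝ → ℝ} (hF : AEStronglyMeasurable F haar) :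
    ∫ U, F (g * U) ∂haar = ∫ U, F U ∂haar := by
  conv_rhs => rw [← hhaar.2 g]
  rw [integral_map (continuous_const_mul g).measurable.aemeasurable (by rwa [hhaar.2 g])]

section RowMoment

variable {n : ℕ} (A : Matrix (Fin n) (Fin n) ℝ) (haar : Measure (orthogonalGroup (Fin n) ℝ))

noncomputable def rowMoment (i j : Fin n) : ℝ :=
  ∫ U, rowForm A i U * rowForm A j U ∂haar

variable {A haar}

theorem rowMoment_perm (hhaar : IsHaarProb n haar) (σ : Equiv.Perm (Fin n)) (i j : Fin n) :
    rowMoment A haar (σ i) (σ j) = rowMoment A haar i j := by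
  have := hhaar.1
  have hrow : ∀ (l : Fin n) (U : orthogonalGroup (Fin n) ℝ),
      rowForm A l (⟨_, σ.permMatrix_mem_orthogonalGroup⟩ * U) = rowForm A (σ l) U := by
    intro l U
    simp only [rowForm, Submonoid.coe_mul, PEquiv.toMatrix_toPEquiv_mul]
    rfl
  have := hhaar.integral_comp_mul_left ⟨_, σ.permMatrix_mem_orthogonalGroup⟩
    ((memLp_rowForm A i 2).integrable_mul (memLp_rowForm A j 2)).1
  simp only [Pi.mul_apply, hrow] at this
  exact this

theorem exists_rowMoment_eq_ite (hhaar : IsHaarProb n haar) :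
    ∃ a b, b ≤ a ∧ ∀ i j, rowMoment A haar i j = if i = j then a else b := by
  have hinv := rowMoment_perm hhaar (A := A)
  rcases subsingleton_or_nontrivial (Fin n) with _ | _
  -- for `n ≤ 1` the sum is the only diagonal entry, if there is one
  · refine ⟨∑ i, rowMoment A haar i i, ∑ i, rowMoment A haar i i, le_rfl, fun i j => ?_⟩
    rw [Subsingleton.elim j i, if_pos rfl, Fintype.sum_subsingleton _ i]
  obtain ⟨i₀, j₀, h₀⟩ := exists_pair_ne (Fin n)
  refine ⟨rowMoment A haar i₀ i₀, rowMoment A haar i₀ j₀, ?_, fun i j => ?_⟩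
  · have := hhaar.1
    have := two_mul_integral_mul_le (memLp_rowForm (ν := haar) A i₀ 2) (memLp_rowForm A j₀ 2)
    have hdiag := apply_self_eq_of_perm_invariant hinv j₀ i₀
    simp only [rowMoment] at hdiag ⊢
    linarith
  split_ifs with h
  · rw [h, apply_self_eq_of_perm_invariant hinv]
  · exact apply_eq_of_ne_of_perm_invariant hinv h h₀

end RowMoment

theorem sum_sum_mul_ite {ι : Type*} [Fintype ι] [DecidableEq ι] (m : ι → ι → ℝ) (a b : ℝ) :
    ∑ i, ∑ j, m i j * (if i = j then a else b) = b * ∑ i, ∑ j, m i j + (a - b) * ∑ i, m i i := by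
  have hsplit : ∀ i j, m i j * (if i = j then a else b) =
      m i j * b + if i = j then m i j * (a - b) else 0 := fun i j => by split_ifs <;> ring
  simp only [hsplit, sum_add_distrib, sum_ite_eq, mem_univ, if_true, ← sum_mul]
  ring

theorem sum_sum_ite {ι : Type*} [Fintype ι] [DecidableEq ι] (a b : ℝ) :
    ∑ i : ι, ∑ j : ι, (if i = j then a else b) =
      b * Fintype.card ι ^ 2 + (a - b) * Fintype.card ι := by
  simpa [sq] using sum_sum_mul_ite (fun _ _ : ι => (1 : ℝ)) a b

theorem sq_div_mul_le_of_moment_bounds {k n a b Q T : ℝ} (hk : 0 < k) (hba : b ≤ a)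
    (hQ : n ^ 2 ≤ Q) (hQT : Q ≤ k * T) (hs : 0 ≤ b * k ^ 2 + (a - b) * k) :
    (n / k) ^ 2 * (b * k ^ 2 + (a - b) * k) ≤ b * Q + (a - b) * T := by
  have hT : b * Q + (a - b) * (Q / k) ≤ b * Q + (a - b) * T := by
    gcongr
    rwa [div_le_iff₀' hk]
  calc (n / k) ^ 2 * (b * k ^ 2 + (a - b) * k) ≤ (Q / k ^ 2) * (b * k ^ 2 + (a - b) * k) := by
        rw [div_pow]; gcongr
    _ = b * Q + (a - b) * (Q / k) := by field_simp
    _ ≤ _ := hT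

/-- Let `y₁,…,y_k` be the first `k` rows of a Haar-random `n×n` orthogonal matrix, and let
`μ` be a distribution of weights `w ∈ ℝ^k` (independent of the orthogonal matrix) with
finite second moments and `E[Σᵢ wᵢ] = n`.  Then for every `n×n` real matrix `A`,
`E[(Σᵢ wᵢ yᵢᵀAyᵢ)²] ≥ E[(Σᵢ (n/k) yᵢᵀAyᵢ)²]`. -/
theorem stmt1 (n k : ℕ) (hk : 1 ≤ k) (hkn : k ≤ n)
    (haar : Measure (Matrix.orthogonalGroup (Fin n) ℝ)) (hhaar : IsHaarProb n haar)
    (μ : Measure (Fin k → ℝ)) [IsProbabilityMeasure μ]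
    (hmom : ∀ i : Fin k, MemLp (fun w : Fin k → ℝ => w i) 2 μ)
    (hmean : (∫ w : Fin k → ℝ, ∑ i, w i ∂μ) = (n : ℝ))
    (A : Matrix (Fin n) (Fin n) ℝ) :
    (∫ p : (Fin k → ℝ) × Matrix.orthogonalGroup (Fin n) ℝ,
        (∑ i : Fin k, p.1 i *
          ((p.2 : Matrix (Fin n) (Fin n) ℝ) (Fin.castLE hkn i) ⬝ᵥ
            A.mulVec ((p.2 : Matrix (Fin n) (Fin n) ℝ) (Fin.castLE hkn i)))) ^ 2
        ∂(μ.prod haar)) ≥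
      ∫ U : Matrix.orthogonalGroup (Fin n) ℝ,
        (∑ i : Fin k, (n : ℝ) / k *
          ((U : Matrix (Fin n) (Fin n) ℝ) (Fin.castLE hkn i) ⬝ᵥ
            A.mulVec ((U : Matrix (Fin n) (Fin n) ℝ) (Fin.castLE hkn i)))) ^ 2 ∂haar := by
  have := hhaar.1
  obtain ⟨a, b, hba, hC⟩ := exists_rowMoment_eq_ite (A := A) hhaar
  have hf : ∀ i : Fin k, MemLp (rowForm A (Fin.castLE hkn i)) 2 haar :=
    fun i => memLp_rowForm A _ 2
  have hCk : ∀ i j : Fin k,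
      ∫ U, rowForm A (Fin.castLE hkn i) U * rowForm A (Fin.castLE hkn j) U ∂haar =
        if i = j then a else b := fun i j =>
    (hC _ _).trans (if_congr (Fin.castLE_injective hkn).eq_iff rfl rfl)
  have hLHS := integral_prod_sq_sum_mul hmom hf
  have hRHS : ∫ U, (∑ i : Fin k, (n / k : ℝ) * rowForm A (Fin.castLE hkn i) U) ^ 2 ∂haar =
      (n / k : ℝ) ^ 2 * ∫ U, (∑ i : Fin k, rowForm A (Fin.castLE hkn i) U) ^ 2 ∂haar := by
    simp_rw [← mul_sum, mul_pow]
    exact integral_const_mul _ _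
  have hs : 0 ≤ ∫ U, (∑ i : Fin k, rowForm A (Fin.castLE hkn i) U) ^ 2 ∂haar :=
    integral_nonneg fun U => sq_nonneg _
  rw [integral_sq_sum fun i j => (hf i).integrable_mul (hf j)] at hRHS hs
  simp only [hCk, sum_sum_ite, Fintype.card_fin] at hLHS hRHS hs
  rw [sum_sum_mul_ite] at hLHS
  have hQ := sq_integral_sum_le_sum_sum_integral_mul hmom
  have hQT := sum_sum_integral_mul_le_card_mul hmom
  rw [hmean] at hQ
  rw [Fintype.card_fin] at hQT
  exact hRHS.trans_le <|
    (sq_div_mul_le_of_moment_bounds (Nat.cast_pos.2 hk) hba hQ hQT hs).trans_eq hLHS.symm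
end

section
/- Fix an integer n ≥ 2, let r₁ and r₂ be the first two rows of a Haar-random n×n orthogonal matrix, and let θ ∈ ℝ. Then for every n×n real matrix A, E[(r₁ᵀ A r₁) · ((cos θ · r₁ + sin θ · r₂)ᵀ A (cos θ · r₁ + sin θ · r₂))] ≥ E[(r₁ᵀ A r₁)(r₂ᵀ A r₂)], where the expectation is over the Haar measure. -/
open MeasureTheory Matrix

/-! Write `q r = r ⬝ᵥ A *ᵥ r`. Expanding the rotated row, the left side is
`cos²θ E[q(r₁)²] + cos θ sin θ E[q(r₁)(r₁ᵀAr₂ + r₂ᵀAr₁)] + sin²θ E[q(r₁) q(r₂)]`.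
The middle integrand is odd in `r₂` and Haar measure is invariant under the reflection
`r₂ ↦ -r₂`, so that term vanishes; Haar measure is also invariant under swapping `r₁` and `r₂`,
so `E[q(r₁)²] = E[q(r₂)²]` and AM-GM gives `E[q(r₁) q(r₂)] ≤ E[q(r₁)²]`. As `cos²θ + sin²θ = 1`, the claim follows. -/

instance matrixBorelSpace (n : ℕ) : BorelSpace (Matrix (Fin n) (Fin n) ℝ) :=
  inferInstanceAs (BorelSpace (Fin n → Fin n → ℝ))

instance Matrix.unitaryGroup.instCompactSpace {ι 𝕜 : Type*} [Fintype ι] [DecidableEq ι]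
    [RCLike 𝕜] : CompactSpace (unitaryGroup ι 𝕜) :=
  isCompact_iff_compactSpace.mp <|
    (isCompact_closedBall (0 : ι → ι → 𝕜) 1).of_isClosed_subset
      (isClosed_unitary (R := Matrix ι ι 𝕜)) fun U hU => by
        simpa [pi_norm_le_iff_of_nonneg] using entry_norm_bound_of_unitary hU

theorem Continuous.integrable_of_compactSpace {X E : Type*} [TopologicalSpace X]
    [MeasurableSpace X] [OpensMeasurableSpace X] [CompactSpace X] [NormedAddCommGroup E]
    {μ : Measure X} [IsFiniteMeasure μ] {f : X → E} (hf : Continuous f) : Integrable f μ :=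
  hf.integrable_of_hasCompactSupport (.of_compactSpace f)

theorem IsHaarProb.isMulLeftInvariant {n : ℕ} {μ : Measure (orthogonalGroup (Fin n) ℝ)}
    (hμ : IsHaarProb n μ) : μ.IsMulLeftInvariant :=
  ⟨hμ.2⟩

theorem Matrix.dotProduct_mulVec_smul_add_smul {ι R : Type*} [Fintype ι] [CommRing R]
    (A : Matrix ι ι R) (a b : R) (u v : ι → R) :
    (a • u + b • v) ⬝ᵥ A *ᵥ (a • u + b • v) =
      a ^ 2 * (u ⬝ᵥ A *ᵥ u) + a * b * (u ⬝ᵥ A *ᵥ v + v ⬝ᵥ A *ᵥ u) + b ^ 2 * (v ⬝ᵥ A *ᵥ v) := by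
  simp only [mulVec_add, mulVec_smul, dotProduct_add, add_dotProduct, dotProduct_smul,
    smul_dotProduct, smul_eq_mul]
  ring

namespace Matrix.orthogonalGroup

section RowOperations

variable {ι : Type*} [Fintype ι] [DecidableEq ι]

def rowVec (U : orthogonalGroup ι ℝ) (i : ι) : ι → ℝ :=
  (U : Matrix ι ι ℝ) i

@[fun_prop]
theorem continuous_rowVec (i : ι) : Continuous fun U : orthogonalGroup ι ℝ => rowVec U i :=
  (continuous_apply i).comp continuous_subtype_val

def rowPerm (σ : Equiv.Perm ι) : orthogonalGroup ι ℝ :=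
  ⟨σ.permMatrix ℝ, by
    rw [mem_orthogonalGroup_iff, transpose_permMatrix, ← permMatrix_mul, inv_mul_cancel,
      permMatrix_one]⟩

@[simp]
theorem rowVec_rowPerm_mul (σ : Equiv.Perm ι) (U : orthogonalGroup ι ℝ) (i : ι) :
    rowVec (rowPerm σ * U) i = rowVec U (σ i) := by
  simp only [rowVec, rowPerm, Submonoid.coe_mul, PEquiv.toMatrix_toPEquiv_mul]
  rfl

def rowNeg (j : ι) : orthogonalGroup ι ℝ :=
  ⟨diagonal (Function.update 1 j (-1)), by
    rw [mem_orthogonalGroup_iff, diagonal_transpose, diagonal_mul_diagonal, ← diagonal_one]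
    congr 1
    ext i
    by_cases h : i = j <;> simp [h]⟩

@[simp]
theorem rowVec_rowNeg_mul_self (j : ι) (U : orthogonalGroup ι ℝ) :
    rowVec (rowNeg j * U) j = -rowVec U j := by
  ext k
  simp [rowVec, rowNeg, diagonal_mul]

@[simp]
theorem rowVec_rowNeg_mul_of_ne {i j : ι} (hij : i ≠ j) (U : orthogonalGroup ι ℝ) :
    rowVec (rowNeg j * U) i = rowVec U i := by
  ext k
  simp [rowVec, rowNeg, diagonal_mul, hij]

end RowOperations

section Integrals

variable {n : ℕ} {μ : Measure (orthogonalGroup (Fin n) ℝ)} [μ.IsMulLeftInvariant]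

theorem integral_rowVec_swap (F : (Fin n → ℝ) → (Fin n → ℝ) → ℝ) (i j : Fin n) :
    ∫ U, F (rowVec U j) (rowVec U i) ∂μ = ∫ U, F (rowVec U i) (rowVec U j) ∂μ := by
  simpa using integral_mul_left_eq_self (μ := μ) (fun U => F (rowVec U i) (rowVec U j))
    (rowPerm (Equiv.swap i j))

theorem integral_rowVec_eq_zero_of_odd (F : (Fin n → ℝ) → (Fin n → ℝ) → ℝ)
    (hF : ∀ u v, F u (-v) = -F u v) {i j : Fin n} (hij : i ≠ j) :
    ∫ U, F (rowVec U i) (rowVec U j) ∂μ = 0 := by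
  have h := integral_mul_left_eq_self (μ := μ) (fun U => F (rowVec U i) (rowVec U j)) (rowNeg j)
  simp only [rowVec_rowNeg_mul_self, rowVec_rowNeg_mul_of_ne hij, hF, integral_neg] at h
  linarith

variable [IsFiniteMeasure μ]

theorem integral_mul_le_integral_sq {f : (Fin n → ℝ) → ℝ} (hf : Continuous f) (i j : Fin n) :
    ∫ U, f (rowVec U i) * f (rowVec U j) ∂μ ≤ ∫ U, f (rowVec U i) ^ 2 ∂μ := by
  have hint : ∀ k, Integrable (fun U => f (rowVec U k) ^ 2) μ :=
    fun k => Continuous.integrable_of_compactSpace (by fun_prop)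
  calc ∫ U, f (rowVec U i) * f (rowVec U j) ∂μ
      ≤ ∫ U, (f (rowVec U i) ^ 2 + f (rowVec U j) ^ 2) / 2 ∂μ :=
        integral_mono (Continuous.integrable_of_compactSpace (by fun_prop))
          (((hint i).add (hint j)).div_const 2) fun U => by
            nlinarith [sq_nonneg (f (rowVec U i) - f (rowVec U j))]
    _ = ∫ U, f (rowVec U i) ^ 2 ∂μ := by
        rw [integral_div, integral_add (hint i) (hint j),
          integral_rowVec_swap (fun _ v => f v ^ 2) i j]
        ring

theorem integral_quadForm_mul_quadForm_smul_add_smul (A : Matrix (Fin n) (Fin n) ℝ)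
    (a b : ℝ) {i j : Fin n} (hij : i ≠ j) :
    ∫ U, (rowVec U i ⬝ᵥ A *ᵥ rowVec U i) *
        ((a • rowVec U i + b • rowVec U j) ⬝ᵥ A *ᵥ (a • rowVec U i + b • rowVec U j)) ∂μ =
      a ^ 2 * ∫ U, (rowVec U i ⬝ᵥ A *ᵥ rowVec U i) ^ 2 ∂μ +
        b ^ 2 * ∫ U, (rowVec U i ⬝ᵥ A *ᵥ rowVec U i) * (rowVec U j ⬝ᵥ A *ᵥ rowVec U j) ∂μ := by
  let cross : (Fin n → ℝ) → (Fin n → ℝ) → ℝ := fun u v =>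
    (u ⬝ᵥ A *ᵥ u) * (u ⬝ᵥ A *ᵥ v + v ⬝ᵥ A *ᵥ u)
  have h_cross : ∫ U, cross (rowVec U i) (rowVec U j) ∂μ = 0 :=
    integral_rowVec_eq_zero_of_odd cross (fun u v => by
      simp only [cross, mulVec_neg, dotProduct_neg, neg_dotProduct]; ring) hij
  have h_expand : ∀ u v : Fin n → ℝ,
      (u ⬝ᵥ A *ᵥ u) * ((a • u + b • v) ⬝ᵥ A *ᵥ (a • u + b • v)) =
      a ^ 2 * (u ⬝ᵥ A *ᵥ u) ^ 2 + a * b * cross u v + b ^ 2 * ((u ⬝ᵥ A *ᵥ u) * (v ⬝ᵥ A *ᵥ v)) :=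
    fun u v => by rw [dotProduct_mulVec_smul_add_smul]; ring
  simp_rw [h_expand]
  rw [integral_add (Continuous.integrable_of_compactSpace (by fun_prop))
      (Continuous.integrable_of_compactSpace (by fun_prop)),
    integral_add (Continuous.integrable_of_compactSpace (by fun_prop))
      (Continuous.integrable_of_compactSpace (by fun_prop)),
    integral_const_mul, integral_const_mul, integral_const_mul, h_cross, mul_zero, add_zero]

end Integrals

end Matrix.orthogonalGroup

open Matrix.orthogonalGroup in
/-- For `n ≥ 2`, `r₁, r₂` the first two rows of a Haar-random `n×n` orthogonal matrix,
`θ ∈ ℝ` and any `n×n` real matrix `A`,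
`E[(r₁ᵀAr₁)·((cos θ·r₁ + sin θ·r₂)ᵀ A (cos θ·r₁ + sin θ·r₂))] ≥ E[(r₁ᵀAr₁)(r₂ᵀAr₂)]`. -/
theorem stmt2 (n : ℕ) (hn : 2 ≤ n)
    (μ : Measure (Matrix.orthogonalGroup (Fin n) ℝ)) (hμ : IsHaarProb n μ)
    (θ : ℝ) (A : Matrix (Fin n) (Fin n) ℝ) :
    ∫ U : Matrix.orthogonalGroup (Fin n) ℝ,
        (fun r₁ r₂ : Fin n → ℝ =>
            (r₁ ⬝ᵥ A.mulVec r₁) *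
              ((fun j => Real.cos θ * r₁ j + Real.sin θ * r₂ j) ⬝ᵥ
                A.mulVec fun j => Real.cos θ * r₁ j + Real.sin θ * r₂ j))
          ((U : Matrix (Fin n) (Fin n) ℝ) ⟨0, by omega⟩)
          ((U : Matrix (Fin n) (Fin n) ℝ) ⟨1, by omega⟩) ∂μ ≥
      ∫ U : Matrix.orthogonalGroup (Fin n) ℝ,
        (fun r₁ r₂ : Fin n → ℝ => (r₁ ⬝ᵥ A.mulVec r₁) * (r₂ ⬝ᵥ A.mulVec r₂))
          ((U : Matrix (Fin n) (Fin n) ℝ) ⟨0, by omega⟩)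
          ((U : Matrix (Fin n) (Fin n) ℝ) ⟨1, by omega⟩) ∂μ := by
  have := hμ.1
  have := hμ.isMulLeftInvariant
  set i₀ : Fin n := ⟨0, by omega⟩
  set i₁ : Fin n := ⟨1, by omega⟩
  show ∫ U, (rowVec U i₀ ⬝ᵥ A *ᵥ rowVec U i₀) *
      ((Real.cos θ • rowVec U i₀ + Real.sin θ • rowVec U i₁) ⬝ᵥ
        A *ᵥ (Real.cos θ • rowVec U i₀ + Real.sin θ • rowVec U i₁)) ∂μ ≥
    ∫ U, (rowVec U i₀ ⬝ᵥ A *ᵥ rowVec U i₀) * (rowVec U i₁ ⬝ᵥ A *ᵥ rowVec U i₁) ∂μ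
  rw [integral_quadForm_mul_quadForm_smul_add_smul A _ _ (by simp [i₀, i₁, Fin.ext_iff]),
    Real.sin_sq]
  have h_amgm := integral_mul_le_integral_sq (μ := μ) (f := fun u => u ⬝ᵥ A *ᵥ u)
    (by fun_prop) i₀ i₁
  linarith [mul_le_mul_of_nonneg_left h_amgm (sq_nonneg (Real.cos θ))]
end

section
/- Fix C₀ > 0, an integer k ≥ 1, θ with 0 < θ ≤ C₀, and c > 0. Let f₁ and f₂ be the probability density functions on ℝ^k of N(0,1)^k and N(0,1+θ)^k respectively, i.e. f₁(z) = (2π)^{−k/2} e^{−‖z‖²/2} and f₂(z) = (2π(1+θ))^{−k/2} e^{−‖z‖²/(2(1+θ))}. Then for every z ∈ ℝ^k with k − c ≤ ‖z‖² ≤ k + c, one has exp(kθ²/(4(C₀+1)²) − θc/2) ≤ f₁(z)/f₂(z) ≤ exp(kθ²/4 + θc/2). -/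
/-!
Writing `S = ‖z‖²`, the log of the density ratio is
`(k/2) (log(1+θ) - θ/(1+θ)) - (S - k) θ / (2(1+θ))`.
The first term is `k · KL(N(0,1) ‖ N(0,1+θ))`; comparing
derivatives, `x/(1+x)²` against `x` and `x/(C₀+1)²`, squeezes the bracket between
`θ²/(2(C₀+1)²)` and `θ²/2`. The second term is at most `cθ/2` in absolute value since
`|S - k| ≤ c` and `θ/(1+θ) ≤ θ`.
-/

open Real Set

lemma sub_le_sub_of_hasDerivAt_le {f g f' g' : ℝ → ℝ} {a b : ℝ} (hab : a ≤ b)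
    (hf : ∀ x ∈ Icc a b, HasDerivAt f (f' x) x) (hg : ∀ x ∈ Icc a b, HasDerivAt g (g' x) x)
    (hle : ∀ x ∈ Ioo a b, f' x ≤ g' x) : f b - f a ≤ g b - g a := by
  have hmono : MonotoneOn (fun x => g x - f x) (Icc a b) := by
    refine monotoneOn_of_hasDerivWithinAt_nonneg (f' := fun x => g' x - f' x) (convex_Icc a b)
      (fun x hx => ((hg x hx).sub (hf x hx)).continuousAt.continuousWithinAt) (fun x hx => ?_)
      (fun x hx => ?_) <;> rw [interior_Icc] at hx
    · exact ((hg x (Ioo_subset_Icc_self hx)).sub (hf x (Ioo_subset_Icc_self hx))).hasDerivWithinAt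
    · exact sub_nonneg.2 (hle x hx)
  have := hmono ⟨le_rfl, hab⟩ ⟨hab, le_rfl⟩ hab
  simp only at this
  linarith

lemma hasDerivAt_log_one_add_sub_div_one_add {x : ℝ} (hx : -1 < x) :
    HasDerivAt (fun x => log (1 + x) - x / (1 + x)) (x / (1 + x) ^ 2) x := by
  have hne : 1 + x ≠ 0 := by linarith
  have h1 : HasDerivAt (fun x : ℝ => 1 + x) 1 x := (hasDerivAt_id x).const_add 1
  refine ((h1.log hne).sub ((hasDerivAt_id' x).div h1 hne)).congr_deriv ?_
  field_simp
  ring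

lemma log_one_add_sub_div_one_add_le {θ : ℝ} (hθ : 0 ≤ θ) :
    log (1 + θ) - θ / (1 + θ) ≤ θ ^ 2 / 2 := by
  have key := sub_le_sub_of_hasDerivAt_le (f' := fun x => x / (1 + x) ^ 2) (g' := fun x => x) hθ
    (fun x hx => hasDerivAt_log_one_add_sub_div_one_add (by linarith [hx.1]))
    (fun x _ => ((hasDerivAt_pow 2 x).div_const 2).congr_deriv (by ring))
    (fun x hx => div_le_self hx.1.le (by nlinarith [hx.1]))
  simpa using key

lemma sq_div_le_log_one_add_sub_div_one_add {C θ : ℝ} (hθ : 0 ≤ θ) (hθC : θ ≤ C) :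
    θ ^ 2 / (2 * (C + 1) ^ 2) ≤ log (1 + θ) - θ / (1 + θ) := by
  have key := sub_le_sub_of_hasDerivAt_le (f' := fun x => x / (C + 1) ^ 2)
    (g' := fun x => x / (1 + x) ^ 2) hθ
    (fun x _ => ((hasDerivAt_pow 2 x).div_const (2 * (C + 1) ^ 2)).congr_deriv
      (by field_simp; ring))
    (fun x hx => hasDerivAt_log_one_add_sub_div_one_add (by linarith [hx.1]))
    (fun x hx => div_le_div_of_nonneg_left hx.1.le (by nlinarith [hx.1]) (by nlinarith [hx.1, hx.2]))
  simpa using key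

lemma gaussian_density_ratio_eq (k S : ℝ) {θ : ℝ} (hθ : -1 < θ) :
    (2 * π) ^ (-k / 2) * exp (-S / 2) /
        ((2 * π * (1 + θ)) ^ (-k / 2) * exp (-S / (2 * (1 + θ)))) =
      exp (k / 2 * (log (1 + θ) - θ / (1 + θ)) - (S - k) * (θ / (1 + θ)) / 2) := by
  have hπ : 0 < 2 * π := by positivity
  have hθ' : 0 < 1 + θ := by linarith
  rw [rpow_def_of_pos hπ, rpow_def_of_pos (mul_pos hπ hθ'), log_mul hπ.ne' hθ'.ne',
    ← exp_add, ← exp_add, ← exp_sub]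
  congr 1
  field_simp
  ring

theorem stmt9_general (C₀ : ℝ) (k : ℕ)
    (θ : ℝ) (hθ0 : 0 < θ) (hθ : θ ≤ C₀) (c : ℝ)
    (z : Fin k → ℝ) (hz1 : (k : ℝ) - c ≤ ∑ i, z i ^ 2) (hz2 : ∑ i, z i ^ 2 ≤ (k : ℝ) + c) :
    let f₁ : ℝ := (2 * π) ^ (-(k : ℝ) / 2) * Real.exp (-(∑ i, z i ^ 2) / 2)
    let f₂ : ℝ :=
      (2 * π * (1 + θ)) ^ (-(k : ℝ) / 2) * Real.exp (-(∑ i, z i ^ 2) / (2 * (1 + θ)))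
    Real.exp ((k : ℝ) * θ ^ 2 / (4 * (C₀ + 1) ^ 2) - θ * c / 2) ≤ f₁ / f₂ ∧
      f₁ / f₂ ≤ Real.exp ((k : ℝ) * θ ^ 2 / 4 + θ * c / 2) := by
  intro f₁ f₂
  set S := ∑ i, z i ^ 2
  rw [gaussian_density_ratio_eq k S (by linarith), exp_le_exp, exp_le_exp]
  have hw0 : 0 ≤ θ / (1 + θ) := div_nonneg hθ0.le (by linarith)
  have hw : θ / (1 + θ) ≤ θ := div_le_self hθ0.le (by linarith)
  have hfluct : |(S - k) * (θ / (1 + θ))| ≤ c * θ := by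
    rw [abs_mul, abs_of_nonneg hw0]
    exact mul_le_mul (abs_sub_le_iff.2 ⟨by linarith, by linarith⟩) hw hw0 (by linarith)
  have hk : (0 : ℝ) ≤ k / 2 := by positivity
  have hupper := mul_le_mul_of_nonneg_left (log_one_add_sub_div_one_add_le hθ0.le) hk
  have hlower := mul_le_mul_of_nonneg_left (sq_div_le_log_one_add_sub_div_one_add hθ0.le hθ) hk
  have hscale : (k : ℝ) * θ ^ 2 / (4 * (C₀ + 1) ^ 2) = k / 2 * (θ ^ 2 / (2 * (C₀ + 1) ^ 2)) := by
    field_simp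
    ring
  constructor <;> linarith [abs_le.1 hfluct]

/-- For `0 < θ ≤ C₀`, `c > 0` and `z ∈ ℝ^k` with `k − c ≤ ‖z‖² ≤ k + c`, the ratio of the
`N(0,1)^k` and `N(0,1+θ)^k` densities at `z` satisfies
`exp(kθ²/(4(C₀+1)²) − θc/2) ≤ f₁(z)/f₂(z) ≤ exp(kθ²/4 + θc/2)`. -/
theorem stmt9 (C₀ : ℝ) (hC₀ : 0 < C₀) (k : ℕ) (hk : 1 ≤ k)
    (θ : ℝ) (hθ0 : 0 < θ) (hθ : θ ≤ C₀) (c : ℝ) (hc : 0 < c)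
    (z : Fin k → ℝ) (hz1 : (k : ℝ) - c ≤ ∑ i, z i ^ 2) (hz2 : ∑ i, z i ^ 2 ≤ (k : ℝ) + c) :
    let f₁ : ℝ := (2 * π) ^ (-(k : ℝ) / 2) * Real.exp (-(∑ i, z i ^ 2) / 2)
    let f₂ : ℝ :=
      (2 * π * (1 + θ)) ^ (-(k : ℝ) / 2) * Real.exp (-(∑ i, z i ^ 2) / (2 * (1 + θ)))
    Real.exp ((k : ℝ) * θ ^ 2 / (4 * (C₀ + 1) ^ 2) - θ * c / 2) ≤ f₁ / f₂ ∧
      f₁ / f₂ ≤ Real.exp ((k : ℝ) * θ ^ 2 / 4 + θ * c / 2) :=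
  stmt9_general C₀ k θ hθ0 hθ c z hz1 hz2
end

section
/- Let λ be a σ-finite measure on a measurable space, and let P₁ and P₂ be probability measures with densities f₁ and f₂ with respect to λ. Let S be a measurable set and let r ∈ [0,1] be such that r·f₁(z) ≤ f₂(z) and r·f₂(z) ≤ f₁(z) for λ-almost every z ∈ S. Then d_TV(P₁,P₂) ≤ 1 − (r/(1+r)) · (P₁(S) + P₂(S)). -/
/-!
The overlap `∫ min f₁ f₂ dλ` controls the total variation distance: `f₁ - min f₁ f₂` carries
mass `1 - ∫ min f₁ f₂`, so `P₁ s ≤ P₂ s + (1 - ∫ min f₁ f₂)` for every `s`, and symmetrically.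
On `S` the two-sided ratio bound gives `min f₁ f₂ ≥ r/(1+r) · (f₁ + f₂)` pointwise, and
integrating over `S` bounds the overlap below by `r/(1+r) · (P₁ S + P₂ S)`.
-/

open MeasureTheory
open scoped ENNReal NNReal

/-- Total variation distance between two measures:
`d_TV(μ,ν) = sup` over measurable sets `s` of `|μ(s) − ν(s)|`. -/
noncomputable def tvDist {α : Type*} [MeasurableSpace α] (μ ν : Measure α) : ℝ :=
  ⨆ s : {s : Set α // MeasurableSet s}, |(μ s.1).toReal - (ν s.1).toReal|

lemma ENNReal.div_one_add_mul_add_le {c a b : ℝ≥0∞} (h : c * b ≤ a) :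
    c / (1 + c) * (a + b) ≤ a := by
  rw [← ENNReal.mul_div_right_comm]
  refine ENNReal.div_le_of_le_mul ?_
  calc c * (a + b) = c * a + c * b := mul_add _ _ _
    _ ≤ c * a + a := by gcongr
    _ = a * (1 + c) := by ring

lemma ENNReal.div_one_add_mul_add_le_min {c a b : ℝ≥0∞} (hab : c * a ≤ b) (hba : c * b ≤ a) :
    c / (1 + c) * (a + b) ≤ min a b :=
  le_min (div_one_add_mul_add_le hba) (add_comm a b ▸ div_one_add_mul_add_le hab)

section TotalVariation

variable {α : Type*} [MeasurableSpace α]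

lemma tvDist_le_of_forall_le_add {μ ν : Measure α} [IsFiniteMeasure μ] [IsFiniteMeasure ν]
    {ε : ℝ≥0∞} (hε : ε ≠ ∞) (hμν : ∀ s, MeasurableSet s → μ s ≤ ν s + ε)
    (hνμ : ∀ s, MeasurableSet s → ν s ≤ μ s + ε) :
    tvDist μ ν ≤ ε.toReal := by
  refine ciSup_le fun ⟨s, hs⟩ => abs_sub_le_iff.2 ⟨?_, ?_⟩
  · have := ENNReal.toReal_mono (by finiteness) (hμν s hs)
    rw [ENNReal.toReal_add (measure_ne_top _ _) hε] at this
    linarith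
  · have := ENNReal.toReal_mono (by finiteness) (hνμ s hs)
    rw [ENNReal.toReal_add (measure_ne_top _ _) hε] at this
    linarith

variable {lam : Measure α} {f g : α → ℝ≥0∞}

lemma setLIntegral_le_setLIntegral_add_one_sub_lintegral_min (hf : Measurable f)
    (hg : Measurable g) (hf_one : ∫⁻ z, f z ∂lam = 1) (s : Set α) :
    ∫⁻ z in s, f z ∂lam ≤ ∫⁻ z in s, g z ∂lam + (1 - ∫⁻ z, min (f z) (g z) ∂lam) := by
  have hmin : Measurable fun z => min (f z) (g z) := hf.min hg
  have hmin_le : ∀ z, min (f z) (g z) ≤ f z := fun z => min_le_left _ _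
  have hmin_ne_top : ∫⁻ z, min (f z) (g z) ∂lam ≠ ∞ :=
    ne_top_of_le_ne_top (hf_one ▸ ENNReal.one_ne_top) (lintegral_mono hmin_le)
  calc ∫⁻ z in s, f z ∂lam
      = ∫⁻ z in s, min (f z) (g z) ∂lam + ∫⁻ z in s, (f z - min (f z) (g z)) ∂lam := by
        rw [← lintegral_add_left hmin]
        exact lintegral_congr fun z => (add_tsub_cancel_of_le (hmin_le z)).symm
    _ ≤ ∫⁻ z in s, g z ∂lam + ∫⁻ z, (f z - min (f z) (g z)) ∂lam :=
        add_le_add (lintegral_mono fun z => min_le_right _ _) (setLIntegral_le_lintegral _ _)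
    _ = ∫⁻ z in s, g z ∂lam + (1 - ∫⁻ z, min (f z) (g z) ∂lam) := by
        rw [lintegral_sub hmin hmin_ne_top (.of_forall hmin_le), hf_one]

lemma lintegral_eq_one_of_isProbabilityMeasure_withDensity
    [IsProbabilityMeasure (lam.withDensity f)] : ∫⁻ z, f z ∂lam = 1 := by
  rw [← setLIntegral_univ, ← withDensity_apply _ .univ, measure_univ]

lemma lintegral_min_le_one [IsProbabilityMeasure (lam.withDensity f)] :
    ∫⁻ z, min (f z) (g z) ∂lam ≤ 1 :=
  lintegral_eq_one_of_isProbabilityMeasure_withDensity (lam := lam) (f := f) ▸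
    lintegral_mono fun _ => min_le_left _ _

lemma tvDist_withDensity_le_one_sub_lintegral_min (hf : Measurable f) (hg : Measurable g)
    [IsProbabilityMeasure (lam.withDensity f)] [IsProbabilityMeasure (lam.withDensity g)] :
    tvDist (lam.withDensity f) (lam.withDensity g)
      ≤ 1 - (∫⁻ z, min (f z) (g z) ∂lam).toReal := by
  rw [← ENNReal.toReal_one, ← ENNReal.toReal_sub_of_le lintegral_min_le_one ENNReal.one_ne_top]
  refine tvDist_le_of_forall_le_add (by finiteness) (fun s hs => ?_) (fun s hs => ?_) <;>
    simp only [withDensity_apply _ hs]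
  · exact setLIntegral_le_setLIntegral_add_one_sub_lintegral_min hf hg
      lintegral_eq_one_of_isProbabilityMeasure_withDensity s
  · simp only [min_comm (f _)]
    exact setLIntegral_le_setLIntegral_add_one_sub_lintegral_min hg hf
      lintegral_eq_one_of_isProbabilityMeasure_withDensity s

lemma div_one_add_mul_withDensity_add_le_lintegral_min (hf : Measurable f) (hg : Measurable g)
    {S : Set α} (hS : MeasurableSet S) {c : ℝ≥0∞}
    (hfg : ∀ᵐ z ∂lam, z ∈ S → c * f z ≤ g z ∧ c * g z ≤ f z) :
    c / (1 + c) * (lam.withDensity f S + lam.withDensity g S)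
      ≤ ∫⁻ z, min (f z) (g z) ∂lam :=
  calc c / (1 + c) * (lam.withDensity f S + lam.withDensity g S)
      = ∫⁻ z in S, c / (1 + c) * (f z + g z) ∂lam := by
        rw [lintegral_const_mul _ (show Measurable fun z => f z + g z from hf.add hg),
          lintegral_add_left hf, withDensity_apply _ hS, withDensity_apply _ hS]
    _ ≤ ∫⁻ z in S, min (f z) (g z) ∂lam := by
        refine lintegral_mono_ae ((ae_restrict_iff' hS).2 ?_)
        filter_upwards [hfg] with z hz hzS
        exact ENNReal.div_one_add_mul_add_le_min (hz hzS).1 (hz hzS).2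
    _ ≤ ∫⁻ z, min (f z) (g z) ∂lam := setLIntegral_le_lintegral _ _

end TotalVariation

theorem stmt10_general {α : Type*} [MeasurableSpace α] (lam : Measure α)
    (f₁ f₂ : α → ℝ≥0∞) (hf₁ : Measurable f₁) (hf₂ : Measurable f₂)
    (P₁ P₂ : Measure α) (hP₁ : P₁ = lam.withDensity f₁) (hP₂ : P₂ = lam.withDensity f₂)
    [IsProbabilityMeasure P₁] [IsProbabilityMeasure P₂]
    (S : Set α) (hS : MeasurableSet S)
    (r : ℝ) (hr0 : 0 ≤ r)
    (hae : ∀ᵐ z ∂lam, z ∈ S →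
      ENNReal.ofReal r * f₁ z ≤ f₂ z ∧ ENNReal.ofReal r * f₂ z ≤ f₁ z) :
    tvDist P₁ P₂ ≤ 1 - r / (1 + r) * ((P₁ S).toReal + (P₂ S).toReal) := by
  subst hP₁ hP₂
  have hoverlap := div_one_add_mul_withDensity_add_le_lintegral_min hf₁ hf₂ hS hae
  have hoverlap_ne_top : ∫⁻ z, min (f₁ z) (f₂ z) ∂lam ≠ ∞ :=
    ne_top_of_le_ne_top ENNReal.one_ne_top lintegral_min_le_one
  have hreal := ENNReal.toReal_mono hoverlap_ne_top hoverlap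
  rw [ENNReal.toReal_mul, ENNReal.toReal_div, ENNReal.toReal_add (by simp) (by simp),
    ENNReal.toReal_add (measure_ne_top _ _) (measure_ne_top _ _), ENNReal.toReal_one,
    ENNReal.toReal_ofReal hr0] at hreal
  linarith [tvDist_withDensity_le_one_sub_lintegral_min (lam := lam) hf₁ hf₂]

/-- If `P₁, P₂` are probability measures with densities `f₁, f₂` with respect to a σ-finite
measure `λ`, `S` is a measurable set, and `r ∈ [0,1]` satisfies `r·f₁ ≤ f₂` and `r·f₂ ≤ f₁`
λ-a.e. on `S`, then `d_TV(P₁,P₂) ≤ 1 − (r/(1+r))·(P₁(S) + P₂(S))`. -/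
theorem stmt10 {α : Type*} [MeasurableSpace α] (lam : Measure α) [SigmaFinite lam]
    (f₁ f₂ : α → ℝ≥0∞) (hf₁ : Measurable f₁) (hf₂ : Measurable f₂)
    (P₁ P₂ : Measure α) (hP₁ : P₁ = lam.withDensity f₁) (hP₂ : P₂ = lam.withDensity f₂)
    [IsProbabilityMeasure P₁] [IsProbabilityMeasure P₂]
    (S : Set α) (hS : MeasurableSet S)
    (r : ℝ) (hr0 : 0 ≤ r) (hr1 : r ≤ 1)
    (hae : ∀ᵐ z ∂lam, z ∈ S →
      ENNReal.ofReal r * f₁ z ≤ f₂ z ∧ ENNReal.ofReal r * f₂ z ≤ f₁ z) :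
    tvDist P₁ P₂ ≤ 1 - r / (1 + r) * ((P₁ S).toReal + (P₂ S).toReal) :=
  stmt10_general lam f₁ f₂ hf₁ hf₂ P₁ P₂ hP₁ hP₂ S hS r hr0 hae
end
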